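/- Let X be a complex Banach space and Δ : S(c₀(Γ)) → S(X) a surjective isometry. Then for each n ∈ Γ and each λ ∈ 𝕋, Δ(λe_n) ∈ {λΔ(e_n), λ̄Δ(e_n)}. -/

import Mathlib

/-!
Write `F` for `Δ` extended by `0` to all of `c₀(Γ)`, and let `p = F (μ • eₖ)` with `|μ| = 1`.
If `|α| = 1`, `|α - 1| ≤ 1/2` and `F z = α • p`, then `|z k - μ| ≤ ‖z - μ • eₖ‖ = |α - 1|`, and
`z` has no other nonzero coordinate `c = z j`: otherwise put `ζ = c / |c|`,
`y = z k • eₖ - ζ • eⱼ` and `F v = conj α • F y`. Then `‖v - μ • eₖ‖ = ‖y - z‖ ≥ 1 + |c| > 1`,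
and as `‖v‖ = 1` this forces `|v k - μ| > 1`; but `|v k - μ| ≤ ‖v - y‖ + |z k - μ| ≤ 2 |α - 1| ≤ 1`.
Hence multiplication by such an `α` maps `{F (γ • eₖ) : |γ| = 1}` into itself, and since every
unimodular scalar is an eighth power of such an `α`, so does multiplication by any unimodular `λ`.
Finally `F (γ • eₙ) = λ • F eₙ` gives `|γ - 1| = |λ - 1|`, that is `γ ∈ {λ, conj λ}`.
-/

open ZeroAtInfty Metric

/-- The canonical basis vector `e n` of `c₀(Γ)`. -/
noncomputable def stdBasis {Γ : Type*} [TopologicalSpace Γ] [DiscreteTopology Γ] [DecidableEq Γ]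
    (n : Γ) : C₀(Γ, ℂ) where
  toFun := fun k => if k = n then 1 else 0
  continuous_toFun := continuous_of_discreteTopology
  zero_at_infty' := by
    have h : (fun k => if k = n then (1 : ℂ) else 0) =ᶠ[Filter.cocompact Γ] 0 := by
      refine Filter.mem_cocompact.2 ⟨{n}, isCompact_singleton, ?_⟩
      intro k hk
      simp only [Set.mem_compl_iff, Set.mem_singleton_iff] at hk
      simp [hk]
    exact Filter.Tendsto.congr' h.symm tendsto_const_nhds

open ComplexConjugate

theorem Complex.eq_or_eq_conj_of_norm_sub_one_eq {γ α : ℂ} (hnorm : ‖γ‖ = ‖α‖)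
    (hsub : ‖γ - 1‖ = ‖α - 1‖) : γ = α ∨ γ = conj α := by
  have hsq : normSq γ = normSq α := by simp only [← Complex.sq_norm, hnorm]
  have hre : γ.re = α.re := by
    have h := congrArg (· ^ 2) hsub
    simp only [Complex.sq_norm, normSq_sub, map_one, mul_one] at h
    linarith
  have him : (γ.im - α.im) * (γ.im + α.im) = 0 := by
    simp only [normSq_apply, hre] at hsq
    linear_combination hsq
  rcases mul_eq_zero.1 him with h | h
  · exact Or.inl (Complex.ext hre (by linarith))
  · exact Or.inr (Complex.ext (by rw [conj_re, hre]) (by rw [conj_im]; linarith))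

theorem Complex.exists_pow_eq_of_norm_eq_one {α : ℂ} (hα : ‖α‖ = 1) :
    ∃ η : ℂ, ‖η‖ = 1 ∧ ‖η - 1‖ ≤ 1 / 2 ∧ η ^ 8 = α := by
  refine ⟨exp (I * ↑(arg α / 8)), norm_exp_I_mul_ofReal _, ?_, ?_⟩
  · refine Real.norm_exp_I_mul_ofReal_sub_one_le.trans ?_
    rw [Real.norm_eq_abs, abs_div, abs_of_pos (by norm_num : (0 : ℝ) < 8)]
    linarith [abs_arg_le_pi α, Real.pi_le_four]
  · conv_rhs => rw [← norm_mul_exp_arg_mul_I α, hα]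
    rw [← exp_nat_mul]
    push_cast
    ring_nf

section NormedSpace

variable {𝕜 X : Type*} [SeminormedAddCommGroup X]

theorem norm_smul_sub_self [NormedField 𝕜] [NormedSpace 𝕜 X] (α : 𝕜) {q : X} (hq : ‖q‖ = 1) :
    ‖α • q - q‖ = ‖α - 1‖ := by
  rw [show α • q - q = (α - 1) • q by rw [sub_smul, one_smul], norm_smul, hq, mul_one]

theorem norm_conj_smul_sub [RCLike 𝕜] [NormedSpace 𝕜 X] {α : 𝕜} (hα : ‖α‖ = 1) (p q : X) :
    ‖conj α • p - q‖ = ‖p - α • q‖ := calc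
  ‖conj α • p - q‖ = ‖α • (conj α • p - q)‖ := by rw [norm_smul, hα, one_mul]
  _ = ‖p - α • q‖ := by
    rw [smul_sub, smul_smul, RCLike.mul_conj, hα, RCLike.ofReal_one, one_pow, one_smul]

end NormedSpace

namespace ZeroAtInftyContinuousMap

variable {α E : Type*} [TopologicalSpace α] [SeminormedAddCommGroup E]

theorem norm_apply_le (f : C₀(α, E)) (x : α) : ‖f x‖ ≤ ‖f‖ :=
  f.toBCF.norm_coe_le_norm x

theorem norm_le_of_forall_norm_apply_le {f : C₀(α, E)} {C : ℝ} (hC : 0 ≤ C)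
    (h : ∀ x, ‖f x‖ ≤ C) : ‖f‖ ≤ C :=
  (BoundedContinuousFunction.norm_le hC).2 h

end ZeroAtInftyContinuousMap

open ZeroAtInftyContinuousMap (norm_apply_le norm_le_of_forall_norm_apply_le)

section StdBasis

variable {Γ : Type*} [TopologicalSpace Γ] [DiscreteTopology Γ] [DecidableEq Γ]

theorem stdBasis_apply (n k : Γ) : stdBasis n k = if k = n then 1 else 0 := rfl

theorem smul_stdBasis_apply (μ : ℂ) (n k : Γ) :
    (μ • stdBasis n) k = if k = n then μ else 0 := by
  simp [stdBasis_apply]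

theorem norm_smul_stdBasis (μ : ℂ) (n : Γ) : ‖μ • stdBasis n‖ = ‖μ‖ := by
  refine le_antisymm (norm_le_of_forall_norm_apply_le (norm_nonneg μ) fun k => ?_) ?_
  · rw [smul_stdBasis_apply]
    split_ifs <;> simp
  · simpa [stdBasis_apply] using norm_apply_le (μ • stdBasis n) n

theorem norm_stdBasis (n : Γ) : ‖stdBasis n‖ = 1 := by
  simpa using norm_smul_stdBasis 1 n

theorem norm_smul_stdBasis_add_smul_stdBasis {j k : Γ} (hjk : j ≠ k) (a b : ℂ) :
    ‖a • stdBasis k + b • stdBasis j‖ = max ‖a‖ ‖b‖ := by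
  refine le_antisymm (norm_le_of_forall_norm_apply_le (by positivity) fun i => ?_)
    (max_le ?_ ?_)
  · rw [ZeroAtInftyContinuousMap.add_apply, smul_stdBasis_apply, smul_stdBasis_apply]
    split_ifs with hk hj
    · exact absurd (hj.symm.trans hk) hjk
    all_goals simp
  · simpa [stdBasis_apply, hjk.symm] using norm_apply_le (a • stdBasis k + b • stdBasis j) k
  · simpa [stdBasis_apply, hjk] using norm_apply_le (a • stdBasis k + b • stdBasis j) j

theorem one_lt_norm_apply_sub_of_one_lt_norm_sub {v : C₀(Γ, ℂ)} (hv : ‖v‖ ≤ 1) {μ : ℂ}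
    {k : Γ} (h : 1 < ‖v - μ • stdBasis k‖) : 1 < ‖v k - μ‖ := by
  by_contra! hk
  refine h.not_ge (norm_le_of_forall_norm_apply_le zero_le_one fun i => ?_)
  rcases eq_or_ne i k with rfl | hik
  · simpa [stdBasis_apply] using hk
  · simpa [stdBasis_apply, hik] using (norm_apply_le v i).trans hv

end StdBasis

section SphereMap

variable {E X : Type*} [SeminormedAddCommGroup E] [SeminormedAddCommGroup X]

noncomputable def sphereMap (Δ : sphere (0 : E) 1 → sphere (0 : X) 1) : E → X :=
  Function.extend (↑) (fun a ↦ (Δ a : X)) 0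

variable {Δ : sphere (0 : E) 1 → sphere (0 : X) 1}

theorem sphereMap_coe (a : sphere (0 : E) 1) : sphereMap Δ a = Δ a :=
  Subtype.val_injective.extend_apply _ _ a

theorem norm_sphereMap {f : E} (hf : ‖f‖ = 1) : ‖sphereMap Δ f‖ = 1 := by
  lift f to sphere (0 : E) 1 using mem_sphere_zero_iff_norm.2 hf
  rw [sphereMap_coe, ← mem_sphere_zero_iff_norm]
  exact (Δ f).2

theorem Isometry.norm_sphereMap_sub (hΔ : Isometry Δ) {f g : E} (hf : ‖f‖ = 1)
    (hg : ‖g‖ = 1) : ‖sphereMap Δ f - sphereMap Δ g‖ = ‖f - g‖ := by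
  lift f to sphere (0 : E) 1 using mem_sphere_zero_iff_norm.2 hf
  lift g to sphere (0 : E) 1 using mem_sphere_zero_iff_norm.2 hg
  simpa only [sphereMap_coe, Subtype.dist_eq, dist_eq_norm] using hΔ.dist_eq f g

theorem Function.Surjective.exists_sphereMap_eq (hΔ : Function.Surjective Δ) {q : X}
    (hq : ‖q‖ = 1) : ∃ f, ‖f‖ = 1 ∧ sphereMap Δ f = q := by
  obtain ⟨a, ha⟩ := hΔ ⟨q, mem_sphere_zero_iff_norm.2 hq⟩
  exact ⟨a, mem_sphere_zero_iff_norm.1 a.2, by rw [sphereMap_coe, ha]⟩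

end SphereMap

section Rotations

variable {Γ : Type*} [TopologicalSpace Γ] [DiscreteTopology Γ] [DecidableEq Γ]
  {X : Type*} [NormedAddCommGroup X] [NormedSpace ℂ X]

def basisRotations (F : C₀(Γ, ℂ) → X) : Submonoid ℂ where
  carrier := {α | ∀ (k : Γ) (μ : ℂ), ‖μ‖ = 1 →
    ∃ γ, ‖γ‖ = 1 ∧ α • F (μ • stdBasis k) = F (γ • stdBasis k)}
  one_mem' _ μ hμ := ⟨μ, hμ, one_smul ℂ _⟩
  mul_mem' {α β} hα hβ k μ hμ := by
    obtain ⟨γ, hγ, hβγ⟩ := hβ k μ hμ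
    obtain ⟨δ, hδ, hαδ⟩ := hα k γ hγ
    exact ⟨δ, hδ, by rw [mul_smul, hβγ, hαδ]⟩

variable {Δ : sphere (0 : C₀(Γ, ℂ)) 1 → sphere (0 : X) 1}

theorem apply_eq_zero_of_sphereMap_eq_smul (hΔiso : Isometry Δ)
    (hΔsurj : Function.Surjective Δ) {α μ : ℂ} (hα : ‖α‖ = 1) (hα1 : ‖α - 1‖ ≤ 1 / 2)
    (hμ : ‖μ‖ = 1) {j k : Γ} (hjk : j ≠ k) {z : C₀(Γ, ℂ)} (hz : ‖z‖ = 1)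
    (hzk : ‖z k - μ‖ ≤ ‖α - 1‖)
    (hFz : sphereMap Δ z = α • sphereMap Δ (μ • stdBasis k)) : z j = 0 := by
  by_contra hc
  set c := z j
  set ζ : ℂ := c / ‖c‖
  have hζ : ‖ζ‖ = 1 := by simp [ζ, norm_ne_zero_iff.2 hc]
  have hcζ : ‖c + ζ‖ = ‖c‖ + 1 := by
    have hc' : (‖c‖ : ℂ) ≠ 0 := by exact_mod_cast norm_ne_zero_iff.2 hc
    rw [show c + ζ = ((‖c‖ + 1 : ℝ) : ℂ) * ζ by simp only [ζ]; push_cast; field_simp,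
      norm_mul, hζ, mul_one, Complex.norm_real, Real.norm_of_nonneg (by positivity)]
  set y := z k • stdBasis k + (-ζ) • stdBasis j
  have hy : ‖y‖ = 1 := by
    rw [norm_smul_stdBasis_add_smul_stdBasis hjk, norm_neg, hζ]
    exact max_eq_right ((norm_apply_le z k).trans hz.le)
  obtain ⟨v, hv, hFv⟩ := hΔsurj.exists_sphereMap_eq (q := conj α • sphereMap Δ y)
    (by rw [norm_smul, RCLike.norm_conj, hα, norm_sphereMap hy, one_mul])
  have hfar : 1 < ‖v k - μ‖ := by
    refine one_lt_norm_apply_sub_of_one_lt_norm_sub hv.le ?_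
    calc 1 < ‖c + ζ‖ := by rw [hcζ]; linarith [norm_pos_iff.2 hc]
    _ = ‖(z - y) j‖ := by simp [y, c, stdBasis_apply, hjk]
    _ ≤ ‖z - y‖ := norm_apply_le _ _
    _ = ‖v - μ • stdBasis k‖ := by
      rw [← hΔiso.norm_sphereMap_sub hv (by rw [norm_smul_stdBasis, hμ]), hFv,
        norm_conj_smul_sub hα, ← hFz, hΔiso.norm_sphereMap_sub hy hz, norm_sub_rev]
  have hnear : ‖v k - z k‖ ≤ ‖α - 1‖ := calc
    ‖v k - z k‖ = ‖(v - y) k‖ := by simp [y, stdBasis_apply, hjk.symm]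
    _ ≤ ‖v - y‖ := norm_apply_le _ _
    _ = ‖α - 1‖ := by
      rw [← hΔiso.norm_sphereMap_sub hv hy, hFv, norm_smul_sub_self _ (norm_sphereMap hy),
        ← RCLike.norm_conj (α - 1), map_sub, map_one]
  linarith [norm_sub_le_norm_sub_add_norm_sub (v k) (z k) μ]

theorem mem_basisRotations_of_norm_sub_one_le (hΔiso : Isometry Δ)
    (hΔsurj : Function.Surjective Δ) {α : ℂ} (hα : ‖α‖ = 1) (hα1 : ‖α - 1‖ ≤ 1 / 2) :
    α ∈ basisRotations (sphereMap Δ) := by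
  intro k μ hμ
  have hμk : ‖μ • stdBasis k‖ = 1 := by rw [norm_smul_stdBasis, hμ]
  have hp : ‖sphereMap Δ (μ • stdBasis k)‖ = 1 := norm_sphereMap hμk
  obtain ⟨z, hz, hFz⟩ := hΔsurj.exists_sphereMap_eq (q := α • sphereMap Δ (μ • stdBasis k))
    (by rw [norm_smul, hα, hp, one_mul])
  have hzk : ‖z k - μ‖ ≤ ‖α - 1‖ := calc
    ‖z k - μ‖ = ‖(z - μ • stdBasis k) k‖ := by simp [stdBasis_apply]
    _ ≤ ‖z - μ • stdBasis k‖ := norm_apply_le _ _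
    _ = ‖α - 1‖ := by rw [← hΔiso.norm_sphereMap_sub hz hμk, hFz, norm_smul_sub_self _ hp]
  have hzeq : z = z k • stdBasis k := by
    ext i
    rcases eq_or_ne i k with rfl | hik
    · simp [stdBasis_apply]
    · simp [stdBasis_apply, hik,
        apply_eq_zero_of_sphereMap_eq_smul hΔiso hΔsurj hα hα1 hμ hik hz hzk hFz]
  refine ⟨z k, ?_, ?_⟩
  · rw [← norm_smul_stdBasis (z k) k, ← hzeq, hz]
  · rw [← hzeq, hFz]

theorem mem_basisRotations (hΔiso : Isometry Δ) (hΔsurj : Function.Surjective Δ) {α : ℂ}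
    (hα : ‖α‖ = 1) : α ∈ basisRotations (sphereMap Δ) := by
  obtain ⟨η, hη, hη1, rfl⟩ := Complex.exists_pow_eq_of_norm_eq_one hα
  exact pow_mem (mem_basisRotations_of_norm_sub_one_le hΔiso hΔsurj hη hη1) 8

theorem exists_sphereMap_smul_stdBasis_eq_smul (hΔiso : Isometry Δ)
    (hΔsurj : Function.Surjective Δ) (k : Γ) {α : ℂ} (hα : ‖α‖ = 1) :
    ∃ γ, (γ = α ∨ γ = conj α) ∧
      sphereMap Δ (γ • stdBasis k) = α • sphereMap Δ (stdBasis k) := by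
  obtain ⟨γ, hγ, hFγ⟩ := mem_basisRotations hΔiso hΔsurj hα k 1 norm_one
  rw [one_smul] at hFγ
  refine ⟨γ, Complex.eq_or_eq_conj_of_norm_sub_one_eq (hγ.trans hα.symm) ?_, hFγ.symm⟩
  calc ‖γ - 1‖ = ‖(γ - 1) • stdBasis k‖ := (norm_smul_stdBasis _ _).symm
  _ = ‖γ • stdBasis k - stdBasis k‖ := by rw [sub_smul γ 1 (stdBasis k), one_smul]
  _ = ‖α - 1‖ := by
    rw [← hΔiso.norm_sphereMap_sub (by rw [norm_smul_stdBasis, hγ]) (norm_stdBasis k),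
      ← hFγ, norm_smul_sub_self _ (norm_sphereMap (norm_stdBasis k))]

end Rotations

theorem image_of_unimodular_multiple_general {Γ : Type*} [TopologicalSpace Γ] [DiscreteTopology Γ]
    [DecidableEq Γ]
    {X : Type*} [NormedAddCommGroup X] [NormedSpace ℂ X]
    (Δ : sphere (0 : C₀(Γ, ℂ)) 1 → sphere (0 : X) 1)
    (hΔiso : Isometry Δ) (hΔsurj : Function.Surjective Δ)
    (n : Γ) (lam : ℂ) (hlam : ‖lam‖ = 1)
    (x y : sphere (0 : C₀(Γ, ℂ)) 1)
    (hx : (x : C₀(Γ, ℂ)) = lam • stdBasis n)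
    (hy : (y : C₀(Γ, ℂ)) = stdBasis n) :
    (Δ x : X) = lam • (Δ y : X) ∨ (Δ x : X) = (starRingEnd ℂ) lam • (Δ y : X) := by
  rw [← sphereMap_coe x, ← sphereMap_coe y, hx, hy]
  obtain ⟨γ, rfl | rfl, hFγ⟩ := exists_sphereMap_smul_stdBasis_eq_smul hΔiso hΔsurj n hlam
  · exact Or.inl hFγ
  -- `Δ (conj λ eₙ) = λ Δ eₙ`; if also `Δ (conj λ eₙ) = conj λ Δ eₙ`, then `λ` is real.
  obtain ⟨γ', rfl | hγ', hFγ'⟩ := exists_sphereMap_smul_stdBasis_eq_smul hΔiso hΔsurj n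
    (α := conj lam) (by rwa [RCLike.norm_conj])
  · have hp : sphereMap Δ (stdBasis n) ≠ 0 :=
      norm_ne_zero_iff.1 (by rw [norm_sphereMap (norm_stdBasis n)]; exact one_ne_zero)
    have hreal : lam = conj lam := smul_left_injective ℂ hp (hFγ.symm.trans hFγ')
    rw [← hreal] at hFγ'
    exact Or.inl hFγ'
  · rw [hγ', Complex.conj_conj] at hFγ'
    exact Or.inr hFγ'

/-- `Δ(λ eₙ) ∈ {λ Δ(eₙ), conj λ • Δ(eₙ)}` for every unimodular `λ`. -/
theorem image_of_unimodular_multiple {Γ : Type*} [TopologicalSpace Γ] [DiscreteTopology Γ]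
    [DecidableEq Γ] [Infinite Γ]
    {X : Type*} [NormedAddCommGroup X] [NormedSpace ℂ X] [CompleteSpace X]
    (Δ : sphere (0 : C₀(Γ, ℂ)) 1 → sphere (0 : X) 1)
    (hΔiso : Isometry Δ) (hΔsurj : Function.Surjective Δ)
    (n : Γ) (lam : ℂ) (hlam : ‖lam‖ = 1)
    (x y : sphere (0 : C₀(Γ, ℂ)) 1)
    (hx : (x : C₀(Γ, ℂ)) = lam • stdBasis n)
    (hy : (y : C₀(Γ, ℂ)) = stdBasis n) :
    (Δ x : X) = lam • (Δ y : X) ∨ (Δ x : X) = (starRingEnd ℂ) lam • (Δ y : X) :=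
  image_of_unimodular_multiple_general Δ hΔiso hΔsurj n lam hlam x y hx hy
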